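/- arXiv:2002.00057 — 7 statements merged into one kernel-verified Lean document; each statement's English description precedes it below -/
import Mathlib

section
/- Let F : ℝ^n → ℝ^n be a continuously differentiable monotone operator that is L-Lipschitz and has Λ-Lipschitz derivative, for some L, Λ > 0. Fix z^0 ∈ ℝ^n, and suppose there exists z* ∈ ℝ^n with F(z*) = 0 and ‖z^0 − z*‖ ≤ D for some D > 0. If 0 < η ≤ min{5/(ΛD), 1/(30L)} and the extragradient iterates are defined by z^{t+1} = z^t − ηF(z^t − ηF(z^t)) for t ≥ 0, then for every integer T ≥ 1, ‖F(z^T)‖ ≤ 2D/(η√T). -/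
/-!
Write `w = z - η F z` and `z⁺ = z - η F w`. Monotonicity against `z*` and the Lipschitz bound
`‖F w - F z‖ ≤ ηL ‖F z‖` give the descent `‖z⁺ - z*‖² ≤ ‖z - z*‖² - η² (1 - (ηL)²) ‖F z‖²`.
Monotonicity between `z` and `z⁺`, together with `‖F w - F z⁺‖ ≤ ηL ‖F w - F z‖`, shows that
`‖F z‖` does not increase along the iterates. Hence `T η² (1 - (ηL)²) ‖F z_T‖²` is bounded by the
telescoped descent, i.e. by `‖z₀ - z*‖²`.
-/

open RealInnerProductSpace

section Extragradient

variable {E : Type*} [NormedAddCommGroup E] [InnerProductSpace ℝ E]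

/-- With `x = a - b` and `y = b - c`, `‖a‖² - ‖c‖² = 2 ⟪x + y, b⟫ + ‖x‖² - ‖y‖²`. -/
theorem norm_le_norm_of_inner_sub_nonneg_of_norm_sub_le {a b c : E} (hinner : 0 ≤ ⟪a - c, b⟫)
    (hnorm : ‖b - c‖ ≤ ‖a - b‖) : ‖c‖ ≤ ‖a‖ := by
  have hsq : ‖b - c‖ ^ 2 ≤ ‖a - b‖ ^ 2 := pow_le_pow_left₀ (norm_nonneg _) hnorm 2
  rw [norm_sub_sq_real, norm_sub_sq_real] at hsq
  rw [inner_sub_left, real_inner_comm] at hinner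
  refine pow_le_pow_iff_left₀ (norm_nonneg c) (norm_nonneg a) two_ne_zero |>.mp ?_
  linarith [real_inner_comm a b, real_inner_comm b c]

theorem norm_sub_smul_sq_le {a b u : E} {η : ℝ} (hη : 0 ≤ η) (hinner : 0 ≤ ⟪b, u - η • a⟫) :
    ‖u - η • b‖ ^ 2 ≤ ‖u‖ ^ 2 - η ^ 2 * (‖a‖ ^ 2 - ‖b - a‖ ^ 2) := by
  rw [inner_sub_right, real_inner_smul_right] at hinner
  rw [norm_sub_sq_real, norm_sub_sq_real, norm_smul, real_inner_smul_right, Real.norm_eq_abs,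
    abs_of_nonneg hη, real_inner_comm b u]
  nlinarith [mul_le_mul_of_nonneg_left hinner hη]

def IsMonotoneOperator (F : E → E) : Prop :=
  ∀ z z', 0 ≤ ⟪F z - F z', z - z'⟫

def extragradientStep (F : E → E) (η : ℝ) (z : E) : E :=
  z - η • F (z - η • F z)

variable {F : E → E} {K : NNReal} {η : ℝ}

theorem norm_sub_extragradientStep_sq_le (hmono : IsMonotoneOperator F) (hlip : LipschitzWith K F)
    (hη : 0 ≤ η) {zstar : E} (hzstar : F zstar = 0) (z : E) :
    ‖extragradientStep F η z - zstar‖ ^ 2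
      ≤ ‖z - zstar‖ ^ 2 - η ^ 2 * (1 - (η * K) ^ 2) * ‖F z‖ ^ 2 := by
  have hinner : 0 ≤ ⟪F (z - η • F z), (z - zstar) - η • F z⟫ := by
    simpa [hzstar, sub_right_comm] using hmono (z - η • F z) zstar
  have hclose : ‖F (z - η • F z) - F z‖ ≤ η * K * ‖F z‖ := by
    calc ‖F (z - η • F z) - F z‖ ≤ K * ‖(z - η • F z) - z‖ := hlip.norm_sub_le _ _
      _ = η * K * ‖F z‖ := by
        rw [sub_sub_cancel_left, norm_neg, norm_smul, Real.norm_eq_abs, abs_of_nonneg hη]; ring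
  have hclose_sq := pow_le_pow_left₀ (norm_nonneg _) hclose 2
  have hdescent := norm_sub_smul_sq_le hη hinner
  rw [extragradientStep, sub_right_comm]
  nlinarith [mul_le_mul_of_nonneg_left hclose_sq (sq_nonneg η)]

theorem norm_apply_extragradientStep_le (hmono : IsMonotoneOperator F) (hlip : LipschitzWith K F)
    (hη : 0 < η) (hηK : η * K ≤ 1) (z : E) :
    ‖F (extragradientStep F η z)‖ ≤ ‖F z‖ := by
  set w := z - η • F z
  set z' := extragradientStep F η z
  have hzz' : z - z' = η • F w := sub_sub_cancel z _
  have hwz' : w - z' = η • (F w - F z) := by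
    simp only [w, z', extragradientStep, smul_sub]; abel
  apply norm_le_norm_of_inner_sub_nonneg_of_norm_sub_le (b := F w)
  · have h := hmono z z'
    rw [hzz', real_inner_smul_right] at h
    exact nonneg_of_mul_nonneg_right (by linarith) hη
  · calc ‖F w - F z'‖ ≤ K * ‖w - z'‖ := hlip.norm_sub_le _ _
      _ = η * K * ‖F z - F w‖ := by
        rw [hwz', norm_smul, Real.norm_eq_abs, abs_of_pos hη, norm_sub_rev]; ring
      _ ≤ ‖F z - F w‖ := mul_le_of_le_one_left (norm_nonneg _) hηK

section Iterates

variable {z : ℕ → E} (hmono : IsMonotoneOperator F) (hlip : LipschitzWith K F) (hη : 0 < η)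
  (hηK : η * K ≤ 1) {zstar : E} (hzstar : F zstar = 0)
  (hrec : ∀ t, z (t + 1) = extragradientStep F η (z t))
include hmono hlip hη hηK hzstar hrec

theorem extragradient_potential_le (T : ℕ) :
    ‖z T - zstar‖ ^ 2 + T * (η ^ 2 * (1 - (η * K) ^ 2)) * ‖F (z T)‖ ^ 2 ≤ ‖z 0 - zstar‖ ^ 2 := by
  induction T with
  | zero => simp
  | succ T ih =>
    have hdescent := norm_sub_extragradientStep_sq_le hmono hlip hη.le hzstar (z T)
    have hnorm := pow_le_pow_left₀ (norm_nonneg _)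
      (norm_apply_extragradientStep_le hmono hlip hη hηK (z T)) 2
    have hrate : 0 ≤ η ^ 2 * (1 - (η * K) ^ 2) := by
      have : 0 ≤ η * K := mul_nonneg hη.le K.2
      have : (η * K) ^ 2 ≤ 1 := pow_le_one₀ this hηK
      positivity
    rw [hrec T]
    push_cast
    nlinarith [mul_le_mul_of_nonneg_left hnorm (mul_nonneg (Nat.cast_nonneg T) hrate)]

theorem norm_apply_extragradient_le (hηK' : (η * K) ^ 2 ≤ 3 / 4) {T : ℕ} (hT : 1 ≤ T) :
    ‖F (z T)‖ ≤ 2 * ‖z 0 - zstar‖ / (η * Real.sqrt T) := by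
  have hpot := extragradient_potential_le hmono hlip hη hηK hzstar hrec T
  have hTpos : (0 : ℝ) < T := by exact_mod_cast hT
  have hsqrt := Real.sq_sqrt hTpos.le
  rw [le_div_iff₀ (by positivity)]
  refine pow_le_pow_iff_left₀ (by positivity) (by positivity) two_ne_zero |>.mp ?_
  nlinarith [mul_le_mul_of_nonneg_left hηK' (by positivity : (0 : ℝ) ≤ T * η ^ 2 * ‖F (z T)‖ ^ 2),
    sq_nonneg ‖z T - zstar‖]

end Iterates

end Extragradient

theorem extragradient_last_iterate_general {n : ℕ}
    (F : EuclideanSpace ℝ (Fin n) → EuclideanSpace ℝ (Fin n))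
    (hmono : ∀ z z', (0 : ℝ) ≤ inner ℝ (F z - F z') (z - z'))
    (L Λ : ℝ) (hL : 0 < L)
    (hlip : ∀ z z', ‖F z - F z'‖ ≤ L * ‖z - z'‖)
    (zstar : EuclideanSpace ℝ (Fin n)) (hzstar : F zstar = 0)
    (D : ℝ)
    (η : ℝ) (hη : 0 < η) (hηle : η ≤ min (5 / (Λ * D)) (1 / (30 * L)))
    (z : ℕ → EuclideanSpace ℝ (Fin n))
    (hinit : ‖z 0 - zstar‖ ≤ D)
    (hrec : ∀ t : ℕ, z (t + 1) = z t - η • F (z t - η • F (z t))) :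
    ∀ T : ℕ, 1 ≤ T → ‖F (z T)‖ ≤ 2 * D / (η * Real.sqrt T) := by
  intro T hT
  have hlip' : LipschitzWith (⟨L, hL.le⟩ : NNReal) F := lipschitzWith_iff_norm_sub_le.2 hlip
  have hηL : η * L ≤ 1 / 30 := by
    have h := hηle.trans (min_le_right _ _)
    rw [le_div_iff₀ (by positivity)] at h
    linarith
  have hηL' : (η * L) ^ 2 ≤ 3 / 4 := by nlinarith [mul_pos hη hL]
  calc ‖F (z T)‖ ≤ 2 * ‖z 0 - zstar‖ / (η * Real.sqrt T) :=
        norm_apply_extragradient_le hmono hlip' hη (show η * L ≤ 1 by linarith) hzstar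
          hrec hηL' hT
    _ ≤ 2 * D / (η * Real.sqrt T) := by gcongr

/-- Last-iterate convergence of the extragradient algorithm: if `F` is a continuously
differentiable monotone operator that is `L`-Lipschitz with `Λ`-Lipschitz derivative,
`F(z*) = 0`, `‖z⁰ − z*‖ ≤ D`, and `0 < η ≤ min{5/(ΛD), 1/(30L)}`, then the extragradient
iterates `z^{t+1} = z^t − η F(z^t − η F(z^t))` satisfy `‖F(z^T)‖ ≤ 2D/(η √T)` for all `T ≥ 1`. -/
theorem extragradient_last_iterate {n : ℕ}
    (F : EuclideanSpace ℝ (Fin n) → EuclideanSpace ℝ (Fin n))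
    (hF : ContDiff ℝ 1 F)
    (hmono : ∀ z z', (0 : ℝ) ≤ inner ℝ (F z - F z') (z - z'))
    (L Λ : ℝ) (hL : 0 < L) (hΛ : 0 < Λ)
    (hlip : ∀ z z', ‖F z - F z'‖ ≤ L * ‖z - z'‖)
    (hlipderiv : ∀ z z', ‖fderiv ℝ F z - fderiv ℝ F z'‖ ≤ Λ * ‖z - z'‖)
    (zstar : EuclideanSpace ℝ (Fin n)) (hzstar : F zstar = 0)
    (D : ℝ) (hD : 0 < D)
    (η : ℝ) (hη : 0 < η) (hηle : η ≤ min (5 / (Λ * D)) (1 / (30 * L)))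
    (z : ℕ → EuclideanSpace ℝ (Fin n))
    (hinit : ‖z 0 - zstar‖ ≤ D)
    (hrec : ∀ t : ℕ, z (t + 1) = z t - η • F (z t - η • F (z t))) :
    ∀ T : ℕ, 1 ≤ T → ‖F (z T)‖ ≤ 2 * D / (η * Real.sqrt T) :=
  extragradient_last_iterate_general F hmono L Λ hL hlip zstar hzstar D η hη hηle z hinit hrec
end

section
/- Let F : ℝ^n → ℝ^n be a continuously differentiable monotone operator that is L-Lipschitz and has Λ-Lipschitz derivative, and let η > 0. Then for every z ∈ ℝ^n there exist matrices A_z, B_z ∈ ℝ^{n×n} such that A_z + A_zᵀ and B_z + B_zᵀ are positive semidefinite, ‖A_z‖_σ ≤ L, ‖B_z‖_σ ≤ L, ‖A_z − B_z‖_σ ≤ (ηΛ/2)·‖F(z) − F(z − ηF(z))‖, and F(z − ηF(z − ηF(z))) = F(z) − ηA_z F(z) + η² A_z B_z F(z). -/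
open Matrix

/-- The spectral (operator) norm of a real matrix. -/
noncomputable def specNorm {n : ℕ} (A : Matrix (Fin n) (Fin n) ℝ) : ℝ :=
  ‖Matrix.toEuclideanCLM (𝕜 := ℝ) A‖

/-- A matrix acting on a Euclidean vector. -/
noncomputable def mApp {n : ℕ} (A : Matrix (Fin n) (Fin n) ℝ)
    (v : EuclideanSpace ℝ (Fin n)) : EuclideanSpace ℝ (Fin n) :=
  Matrix.toEuclideanCLM (𝕜 := ℝ) A v

/-! The integral form of the mean value theorem writes `F b - F a = Ā(a, b) (b - a)` with
`Ā(a, b) = ∫₀¹ DF(a + t (b - a)) dt`. With `w = z - η F z` and `u = z - η F w`, take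
`A = Ā(z, u)` and `B = Ā(z, w)`: the identity comes from substituting `F w = F z - η B F z` into
`F u = F z - η A F w`. Monotonicity makes the quadratic form of every `DF(x)`, hence of `A` and
`B`, nonnegative; Lipschitz continuity bounds `‖DF(x)‖ ≤ L`; and since at time `t` the two
segments out of `z` are `t ‖u - w‖` apart, `‖A - B‖ ≤ Λ ‖u - w‖ / 2 = η Λ / 2 ‖F z - F w‖`. -/

open scoped RealInnerProductSpace
open intervalIntegral

section MonotoneOperator

variable {E : Type*} [NormedAddCommGroup E] [InnerProductSpace ℝ E]

theorem inner_fderiv_apply_self_nonneg {F : E → E}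
    (hmono : ∀ z z', 0 ≤ ⟪F z - F z', z - z'⟫) {x : E} (hx : DifferentiableAt ℝ F x) (v : E) :
    0 ≤ ⟪v, fderiv ℝ F x v⟫ := by
  have hline : HasDerivAt (fun t : ℝ => F (x + t • v)) (fderiv ℝ F x v) 0 := by
    have hpath : HasDerivAt (fun t : ℝ => x + t • v) v 0 := by
      simpa using ((hasDerivAt_id (0 : ℝ)).smul_const v).const_add x
    exact hx.hasFDerivAt.comp_hasDerivAt_of_eq 0 hpath (by simp)
  have hslope := ((innerSL ℝ v).continuous.tendsto _).comp hline.tendsto_slope_zero_right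
  refine ge_of_tendsto hslope ?_
  filter_upwards [self_mem_nhdsWithin] with t (ht : 0 < t)
  have hm := hmono (x + t • v) x
  rw [add_sub_cancel_left, real_inner_smul_right, real_inner_comm] at hm
  simpa [real_inner_smul_right] using mul_nonneg (inv_nonneg.2 ht.le)
    (nonneg_of_mul_nonneg_right hm ht)

theorem inner_intervalIntegral_apply_self_nonneg [CompleteSpace E] {D : ℝ → E →L[ℝ] E}
    {a b : ℝ} (hab : a ≤ b) (hD : IntervalIntegrable D MeasureTheory.volume a b)
    (h : ∀ t v, 0 ≤ ⟪v, D t v⟫) (v : E) : 0 ≤ ⟪v, (∫ t in a..b, D t) v⟫ := by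
  have hcomm :=
    ((innerSL ℝ v).comp (ContinuousLinearMap.apply ℝ E v)).intervalIntegral_comp_comm hD
  simp only [ContinuousLinearMap.comp_apply, ContinuousLinearMap.apply_apply,
    innerSL_apply_apply] at hcomm
  rw [← hcomm]
  exact integral_nonneg hab fun t _ => h t v

end MonotoneOperator

section AvgFDeriv

variable {E G : Type*} [NormedAddCommGroup E] [NormedSpace ℝ E]
  [NormedAddCommGroup G] [NormedSpace ℝ G]

noncomputable def avgFDeriv (F : E → G) (a b : E) : E →L[ℝ] G :=
  ∫ t in (0 : ℝ)..1, fderiv ℝ F (a + t • (b - a))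

theorem hasDerivAt_comp_segment {F : E → G} {a b : E} {t : ℝ}
    (hF : DifferentiableAt ℝ F (a + t • (b - a))) :
    HasDerivAt (fun s : ℝ => F (a + s • (b - a))) (fderiv ℝ F (a + t • (b - a)) (b - a)) t := by
  have hpath : HasDerivAt (fun s : ℝ => a + s • (b - a)) (b - a) t := by
    simpa using ((hasDerivAt_id t).smul_const (b - a)).const_add a
  exact hF.hasFDerivAt.comp_hasDerivAt t hpath

theorem ContDiff.continuous_fderiv_segment {F : E → G} (hF : ContDiff ℝ 1 F) (a b : E) :
    Continuous fun t : ℝ => fderiv ℝ F (a + t • (b - a)) :=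
  (hF.continuous_fderiv one_ne_zero).comp (by fun_prop)

theorem norm_avgFDeriv_le {F : E → G} {C : ℝ} (h : ∀ x, ‖fderiv ℝ F x‖ ≤ C) (a b : E) :
    ‖avgFDeriv F a b‖ ≤ C := by
  rw [avgFDeriv]
  simpa using norm_integral_le_of_norm_le_const (a := 0) (b := 1) fun t _ => h (a + t • (b - a))

theorem norm_avgFDeriv_sub_avgFDeriv_le {F : E → G} (hF : ContDiff ℝ 1 F) {Λ : ℝ}
    (hΛ : ∀ x y, ‖fderiv ℝ F x - fderiv ℝ F y‖ ≤ Λ * ‖x - y‖) (a b c : E) :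
    ‖avgFDeriv F a b - avgFDeriv F a c‖ ≤ Λ / 2 * ‖b - c‖ := by
  have hpoint : ∀ t ∈ Set.Ioc (0 : ℝ) 1,
      ‖fderiv ℝ F (a + t • (b - a)) - fderiv ℝ F (a + t • (c - a))‖ ≤ Λ * ‖b - c‖ * t := by
    intro t ht
    calc _ ≤ Λ * ‖a + t • (b - a) - (a + t • (c - a))‖ := hΛ _ _
      _ = Λ * ‖b - c‖ * t := by
        rw [show a + t • (b - a) - (a + t • (c - a)) = t • (b - c) by module, norm_smul,
          Real.norm_of_nonneg ht.1.le]
        ring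
  have hle := norm_integral_le_of_norm_le (μ := MeasureTheory.volume) zero_le_one
    (Filter.Eventually.of_forall hpoint)
    ((continuous_const.mul continuous_id).intervalIntegrable 0 1)
  rw [avgFDeriv, avgFDeriv,
    ← integral_sub ((hF.continuous_fderiv_segment a b).intervalIntegrable 0 1)
      ((hF.continuous_fderiv_segment a c).intervalIntegrable 0 1)]
  calc _ ≤ _ := hle
    _ = Λ / 2 * ‖b - c‖ := by rw [integral_const_mul, integral_id]; ring

variable [CompleteSpace G]

theorem apply_eq_add_avgFDeriv {F : E → G} (hF : ContDiff ℝ 1 F) (a b : E) :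
    F b = F a + avgFDeriv F a b (b - a) := by
  have hD := hF.continuous_fderiv_segment a b
  rw [avgFDeriv, ContinuousLinearMap.intervalIntegral_apply (hD.intervalIntegrable 0 1),
    integral_eq_sub_of_hasDerivAt
      (fun _ _ => hasDerivAt_comp_segment (hF.differentiable one_ne_zero _))
      (((ContinuousLinearMap.apply ℝ G (b - a)).continuous.comp hD).intervalIntegrable 0 1)]
  simp

end AvgFDeriv

theorem inner_avgFDeriv_apply_self_nonneg {E : Type*} [NormedAddCommGroup E]
    [InnerProductSpace ℝ E] [CompleteSpace E] {F : E → E} (hF : ContDiff ℝ 1 F)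
    (hmono : ∀ z z', 0 ≤ ⟪F z - F z', z - z'⟫) (a b v : E) :
    0 ≤ ⟪v, avgFDeriv F a b v⟫ :=
  inner_intervalIntegral_apply_self_nonneg zero_le_one
    ((hF.continuous_fderiv_segment a b).intervalIntegrable 0 1)
    (fun _ => inner_fderiv_apply_self_nonneg hmono (hF.differentiable one_ne_zero _)) v

theorem Matrix.posSemidef_add_transpose_of_inner_nonneg {ι : Type*} [Fintype ι] [DecidableEq ι]
    {A : Matrix ι ι ℝ} (h : ∀ x, 0 ≤ ⟪x, toEuclideanCLM (𝕜 := ℝ) A x⟫) : (A + Aᵀ).PosSemidef := by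
  refine .of_dotProduct_mulVec_nonneg (by simp [IsHermitian, add_comm]) fun x => ?_
  have hx := h (WithLp.toLp 2 x)
  rw [inner_toEuclideanCLM] at hx
  rw [star_trivial, add_mulVec, dotProduct_add, mulVec_transpose, dotProduct_comm x (x ᵥ* A),
    ← dotProduct_mulVec]
  linarith

theorem specNorm_toEuclideanCLM_symm {n : ℕ}
    (G : EuclideanSpace ℝ (Fin n) →L[ℝ] EuclideanSpace ℝ (Fin n)) :
    specNorm ((toEuclideanCLM (𝕜 := ℝ)).symm G) = ‖G‖ := by
  rw [specNorm, StarAlgEquiv.apply_symm_apply]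

theorem mApp_toEuclideanCLM_symm {n : ℕ}
    (G : EuclideanSpace ℝ (Fin n) →L[ℝ] EuclideanSpace ℝ (Fin n)) (v : EuclideanSpace ℝ (Fin n)) :
    mApp ((toEuclideanCLM (𝕜 := ℝ)).symm G) v = G v := by
  rw [mApp, StarAlgEquiv.apply_symm_apply]

theorem ab_exist_general {n : ℕ}
    (F : EuclideanSpace ℝ (Fin n) → EuclideanSpace ℝ (Fin n))
    (hF : ContDiff ℝ 1 F)
    (hmono : ∀ z z', (0 : ℝ) ≤ inner ℝ (F z - F z') (z - z'))
    (L Λ : ℝ) (hL : 0 < L)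
    (hlip : ∀ z z', ‖F z - F z'‖ ≤ L * ‖z - z'‖)
    (hlipderiv : ∀ z z', ‖fderiv ℝ F z - fderiv ℝ F z'‖ ≤ Λ * ‖z - z'‖)
    (η : ℝ) (hη : 0 < η) :
    ∀ z : EuclideanSpace ℝ (Fin n),
      ∃ A B : Matrix (Fin n) (Fin n) ℝ,
        (A + Aᵀ).PosSemidef ∧ (B + Bᵀ).PosSemidef ∧
        specNorm A ≤ L ∧ specNorm B ≤ L ∧
        specNorm (A - B) ≤ η * Λ / 2 * ‖F z - F (z - η • F z)‖ ∧
        F (z - η • F (z - η • F z))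
          = F z - η • mApp A (F z) + (η ^ 2) • mApp A (mApp B (F z)) := by
  intro z
  set w := z - η • F z
  set u := z - η • F w
  set GA := avgFDeriv F z u
  set GB := avgFDeriv F z w
  have hFw : F w = F z - η • GB (F z) := by
    rw [apply_eq_add_avgFDeriv hF z w, show w - z = -(η • F z) by module, map_neg, map_smul]
    abel
  have hFu : F u = F z - η • GA (F w) := by
    rw [apply_eq_add_avgFDeriv hF z u, show u - z = -(η • F w) by module, map_neg, map_smul]
    abel
  have hfderiv : ∀ x, ‖fderiv ℝ F x‖ ≤ L := fun x =>
    norm_fderiv_le_of_lip' ℝ hL.le (Filter.Eventually.of_forall fun y => hlip y x)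
  refine ⟨(toEuclideanCLM (𝕜 := ℝ)).symm GA, (toEuclideanCLM (𝕜 := ℝ)).symm GB,
    ?_, ?_, ?_, ?_, ?_, ?_⟩
  · exact posSemidef_add_transpose_of_inner_nonneg fun x => by
      simpa using inner_avgFDeriv_apply_self_nonneg hF hmono z u x
  · exact posSemidef_add_transpose_of_inner_nonneg fun x => by
      simpa using inner_avgFDeriv_apply_self_nonneg hF hmono z w x
  · exact (specNorm_toEuclideanCLM_symm GA).trans_le (norm_avgFDeriv_le hfderiv z u)
  · exact (specNorm_toEuclideanCLM_symm GB).trans_le (norm_avgFDeriv_le hfderiv z w)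
  · rw [← map_sub, specNorm_toEuclideanCLM_symm]
    calc ‖GA - GB‖ ≤ Λ / 2 * ‖u - w‖ := norm_avgFDeriv_sub_avgFDeriv_le hF hlipderiv z u w
      _ = η * Λ / 2 * ‖F z - F w‖ := by
        rw [show u - w = η • (F z - F w) by module, norm_smul, Real.norm_of_nonneg hη.le]
        ring
  · simp only [mApp_toEuclideanCLM_symm]
    rw [hFu, hFw, map_sub, map_smul, smul_sub, smul_smul, sq]
    abel

/-- For a continuously differentiable monotone operator `F` that is `L`-Lipschitz with
`Λ`-Lipschitz derivative, and `η > 0`, for every `z` there are matrices `A_z, B_z` with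
`A_z + A_zᵀ`, `B_z + B_zᵀ` PSD, `‖A_z‖_σ, ‖B_z‖_σ ≤ L`,
`‖A_z − B_z‖_σ ≤ (ηΛ/2)·‖F(z) − F(z − ηF(z))‖`, and
`F(z − ηF(z − ηF(z))) = F(z) − η A_z F(z) + η² A_z B_z F(z)`. -/
theorem ab_exist {n : ℕ}
    (F : EuclideanSpace ℝ (Fin n) → EuclideanSpace ℝ (Fin n))
    (hF : ContDiff ℝ 1 F)
    (hmono : ∀ z z', (0 : ℝ) ≤ inner ℝ (F z - F z') (z - z'))
    (L Λ : ℝ) (hL : 0 < L) (hΛ : 0 < Λ)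
    (hlip : ∀ z z', ‖F z - F z'‖ ≤ L * ‖z - z'‖)
    (hlipderiv : ∀ z z', ‖fderiv ℝ F z - fderiv ℝ F z'‖ ≤ Λ * ‖z - z'‖)
    (η : ℝ) (hη : 0 < η) :
    ∀ z : EuclideanSpace ℝ (Fin n),
      ∃ A B : Matrix (Fin n) (Fin n) ℝ,
        (A + Aᵀ).PosSemidef ∧ (B + Bᵀ).PosSemidef ∧
        specNorm A ≤ L ∧ specNorm B ≤ L ∧
        specNorm (A - B) ≤ η * Λ / 2 * ‖F z - F (z - η • F z)‖ ∧
        F (z - η • F (z - η • F z))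
          = F z - η • mApp A (F z) + (η ^ 2) • mApp A (mApp B (F z)) :=
  ab_exist_general F hF hmono L Λ hL hlip hlipderiv η hη
end

section
/- Fix integers k, t ≥ 1 and a real L > 0. Let r be a polynomial with real coefficients of degree at most k such that r(0) = 1. Then there exists y ∈ [L/(20tk²), L] such that y·|r(y)|^t > L/(40tk²). -/
/-!
Suppose `y |r(y)|^t ≤ L/(40tk²)` on `[c, L]`, where `c = L/(20tk²)`; then `|r|^t ≤ 1/2` there.
Transporting `[c, L]` affinely onto `[-1, 1]`, the extremal growth of Chebyshev polynomials outside
`[-1, 1]` gives `1 = |r(0)|^t ≤ T_k(x₀)^t / 2` with `x₀ = (L + c)/(L - c) ≤ 1 + 1/(2tk²)`.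
Writing `x₀ = cosh u`, we have `u²/2 ≤ x₀ - 1` and `T_k(x₀) = cosh(ku) ≤ exp(k²u²/2)`, hence
`T_k(x₀)^t ≤ exp(1/2) < 2`, a contradiction.
-/

open Polynomial Polynomial.Chebyshev Real Set

lemma Real.one_add_sq_div_two_le_cosh (x : ℝ) : 1 + x ^ 2 / 2 ≤ cosh x := by
  have hcosh := cosh_two_mul (x / 2)
  rw [show 2 * (x / 2) = x by ring, cosh_sq] at hcosh
  have hsinh : (x / 2) ^ 2 ≤ sinh (x / 2) ^ 2 := by
    rw [sq_le_sq, abs_sinh]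
    exact self_le_sinh_iff.mpr (abs_nonneg _)
  linarith

lemma Real.exp_half_lt_two : exp (1 / 2) < 2 :=
  (lt_log_iff_exp_lt two_pos).mp (by linarith [log_two_gt_d9])

namespace Polynomial.Chebyshev

lemma abs_eval_le_eval_T_real {n : ℕ} {P : ℝ[X]} (hPdeg : P.degree ≤ n)
    (hPbnd : ∀ x ∈ Icc (-1) 1, |P.eval x| ≤ 1) {x : ℝ} (hx : 1 ≤ x) :
    |P.eval x| ≤ (T ℝ n).eval x := by
  have hle : ∀ Q : ℝ[X], Q.degree ≤ n → (∀ x ∈ Icc (-1) 1, |Q.eval x| ≤ 1) →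
      Q.eval x ≤ (T ℝ n).eval x :=
    fun _ hQdeg hQbnd => eval_iterate_derivative_le_of_forall_abs_le_one (k := 0) hx hQdeg hQbnd
  have hneg := hle (-P) (by rwa [degree_neg]) (by simpa using hPbnd)
  rw [eval_neg] at hneg
  exact abs_le.mpr ⟨by linarith, hle P hPdeg hPbnd⟩

lemma abs_eval_le_mul_eval_T_real_of_le {k : ℕ} {r : ℝ[X]} (hdeg : r.natDegree ≤ k)
    {a b M : ℝ} (hab : a < b) (hM : 0 < M) (hbnd : ∀ y ∈ Icc a b, |r.eval y| ≤ M)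
    {y : ℝ} (hy : y ≤ a) :
    |r.eval y| ≤ M * (T ℝ k).eval ((a + b - 2 * y) / (b - a)) := by
  have hba : 0 < b - a := sub_pos.mpr hab
  set ℓ : ℝ[X] := Polynomial.C ((a + b) / 2) - Polynomial.C ((b - a) / 2) * X
  set P : ℝ[X] := Polynomial.C M⁻¹ * r.comp ℓ
  have hP : ∀ x, P.eval x = M⁻¹ * r.eval ((a + b) / 2 - (b - a) / 2 * x) := by simp [P, ℓ]
  have hℓdeg : ℓ.natDegree ≤ 1 := by
    rw [show ℓ = Polynomial.C (-((b - a) / 2)) * X + Polynomial.C ((a + b) / 2) by simp [ℓ]; ring]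
    exact natDegree_linear_le
  have hPdeg : P.degree ≤ k := by
    refine degree_le_of_natDegree_le ((natDegree_C_mul_le _ _).trans ?_)
    exact natDegree_comp_le.trans (by nlinarith)
  have hPbnd : ∀ x ∈ Icc (-1) 1, |P.eval x| ≤ 1 := by
    rintro x ⟨hx₁, hx₂⟩
    rw [hP, abs_mul, abs_inv, abs_of_pos hM, inv_mul_le_one₀ hM]
    exact hbnd _ ⟨by nlinarith, by nlinarith⟩
  have hx : 1 ≤ (a + b - 2 * y) / (b - a) := by rw [le_div_iff₀ hba]; linarith
  have h := abs_eval_le_eval_T_real hPdeg hPbnd hx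
  have hyx : (a + b) / 2 - (b - a) / 2 * ((a + b - 2 * y) / (b - a)) = y := by
    field_simp
    ring
  rwa [hP, hyx, abs_mul, abs_inv, abs_of_pos hM, inv_mul_le_iff₀ hM] at h

lemma abs_eval_pow_le_mul_eval_T_real_pow {k t : ℕ} (ht : t ≠ 0) {r : ℝ[X]}
    (hdeg : r.natDegree ≤ k) {a b B : ℝ} (hab : a < b) (hB : 0 < B)
    (hbnd : ∀ y ∈ Icc a b, |r.eval y| ^ t ≤ B) {y : ℝ} (hy : y ≤ a) :
    |r.eval y| ^ t ≤ B * (T ℝ k).eval ((a + b - 2 * y) / (b - a)) ^ t := by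
  set M := B ^ (t⁻¹ : ℝ)
  have hMt : M ^ t = B := rpow_inv_natCast_pow hB.le ht
  have hM : 0 < M := by positivity
  have hbndM : ∀ y ∈ Icc a b, |r.eval y| ≤ M := fun y hy ↦ by
    rw [← pow_le_pow_iff_left₀ (abs_nonneg _) hM.le ht, hMt]
    exact hbnd y hy
  calc |r.eval y| ^ t ≤ (M * (T ℝ k).eval ((a + b - 2 * y) / (b - a))) ^ t := by
        gcongr
        exact abs_eval_le_mul_eval_T_real_of_le hdeg hab hM hbndM hy
    _ = B * (T ℝ k).eval ((a + b - 2 * y) / (b - a)) ^ t := by rw [mul_pow, hMt]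

lemma eval_T_real_le_exp (k : ℕ) {x ε : ℝ} (hx : 1 ≤ x) (hxε : x ≤ 1 + ε) :
    (T ℝ k).eval x ≤ exp (k ^ 2 * ε) := by
  set u := arcosh x
  have hu : cosh u = x := cosh_arcosh hx
  have hu2 : u ^ 2 / 2 ≤ ε := by linarith [one_add_sq_div_two_le_cosh u]
  calc (T ℝ k).eval x = cosh (k * u) := by rw [← hu, T_real_cosh]; norm_cast
    _ ≤ exp ((k * u) ^ 2 / 2) := cosh_le_exp_half_sq _
    _ ≤ exp (k ^ 2 * ε) := by
        gcongr
        rw [mul_pow, mul_div_assoc]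
        exact mul_le_mul_of_nonneg_left hu2 (by positivity)

end Polynomial.Chebyshev

/-- For any real polynomial `r` of degree at most `k` with `r(0) = 1`, there exists
`y ∈ [L/(20 t k²), L]` with `y · |r(y)|^t > L/(40 t k²)`. -/
theorem poly_lower_bound (k t : ℕ) (hk : 1 ≤ k) (ht : 1 ≤ t) (L : ℝ) (hL : 0 < L)
    (r : Polynomial ℝ) (hdeg : r.natDegree ≤ k) (h0 : r.eval 0 = 1) :
    ∃ y : ℝ, y ∈ Set.Icc (L / (20 * t * k ^ 2)) L ∧
      L / (40 * t * k ^ 2) < y * |r.eval y| ^ t := by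
  by_contra! hsmall
  have hk' : (1 : ℝ) ≤ k := by exact_mod_cast hk
  have ht' : (1 : ℝ) ≤ t := by exact_mod_cast ht
  set c := L / (20 * t * k ^ 2) with hc
  have hc0 : 0 < c := by positivity
  have hcL : c < L := div_lt_self hL (by nlinarith)
  have hbnd : ∀ y ∈ Icc c L, |r.eval y| ^ t ≤ 1 / 2 := fun y hy ↦ by
    have hy' := hsmall y hy
    rw [show L / (40 * t * k ^ 2) = c / 2 by rw [hc]; field_simp; ring] at hy'
    nlinarith [hy.1, pow_nonneg (abs_nonneg (r.eval y)) t]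
  have hgrowth :=
    abs_eval_pow_le_mul_eval_T_real_pow (k := k) (by omega) hdeg hcL one_half_pos hbnd hc0.le
  rw [h0, abs_one, one_pow, mul_zero, sub_zero] at hgrowth
  set x₀ := (c + L) / (L - c)
  have hx₀ : 1 ≤ x₀ := by rw [le_div_iff₀ (by linarith)]; linarith
  have hx₀ε : x₀ ≤ 1 + 1 / (2 * t * k ^ 2) := by
    rw [div_le_iff₀ (by linarith), hc]
    field_simp
    nlinarith
  have hT : (T ℝ k).eval x₀ ^ t ≤ exp (1 / 2) := calc
    (T ℝ k).eval x₀ ^ t ≤ exp (k ^ 2 * (1 / (2 * t * k ^ 2))) ^ t := by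
      gcongr
      · exact zero_le_one.trans (one_le_eval_T_real k hx₀)
      · exact eval_T_real_le_exp k hx₀ hx₀ε
    _ = exp (1 / 2) := by rw [← exp_nat_mul]; field_simp
  linarith [exp_half_lt_two]
end

section
/- Fix an integer k ≥ 1 and reals L > μ > 0 such that k ≤ √(L/μ) − 1. Let r be a polynomial with real coefficients of degree at most k such that r(0) = 1. Then there exists y ∈ [μ, L] such that |r(y)| > 1 − 6k²/(√(L/μ) − 1)². -/
/-!
Map `[μ, L]` affinely onto `[-1, 1]`, sending `0` to `τ = (L + μ) / (L - μ) > 1`. Chebyshev's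
extremal property bounds a polynomial of degree `≤ k` at a point `x ≥ 1` by its supremum on
`[-1, 1]` times `T_k(x)`, so `1 = |r 0| ≤ (sup_{[μ, L]} |r|) * T_k(τ)`. With `s = √(L/μ)` one has
`τ = cosh t` for `t = log ((s + 1) / (s - 1)) ≤ 2 / (s - 1)`, hence
`T_k(τ) = cosh (k t) ≤ exp ((k t)² / 2)` and `sup |r| ≥ exp (-(k t)² / 2) ≥ 1 - 2 k² / (s - 1)²`.
-/

open Polynomial Real

namespace Polynomial.Chebyshev

theorem eval_le_mul_eval_T {n : ℕ} {P : ℝ[X]} {M x : ℝ} (hM : 0 < M) (hx : 1 ≤ x)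
    (hPdeg : P.degree ≤ n) (hPbnd : ∀ y ∈ Set.Icc (-1) 1, |P.eval y| ≤ M) :
    P.eval x ≤ M * (T ℝ n).eval x := by
  have hscaled : ∀ y ∈ Set.Icc (-1) 1, |(Polynomial.C M⁻¹ * P).eval y| ≤ 1 := fun y hy => by
    rw [eval_mul, eval_C, abs_mul, abs_of_pos (inv_pos.mpr hM), inv_mul_le_iff₀ hM, mul_one]
    exact hPbnd y hy
  have := eval_iterate_derivative_le_of_forall_abs_le_one (k := 0) hx
    ((degree_C_mul (inv_ne_zero hM.ne')).trans_le hPdeg) hscaled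
  rwa [Function.iterate_zero_apply, Function.iterate_zero_apply, eval_mul, eval_C,
    inv_mul_le_iff₀ hM] at this

theorem abs_eval_le_mul_eval_T {n : ℕ} {P : ℝ[X]} {M x : ℝ} (hx : 1 ≤ x)
    (hPdeg : P.degree ≤ n) (hPbnd : ∀ y ∈ Set.Icc (-1) 1, |P.eval y| ≤ M) :
    |P.eval x| ≤ M * (T ℝ n).eval x := by
  rcases (abs_nonneg _ |>.trans (hPbnd 0 (by norm_num))).eq_or_lt with rfl | hM
  · have hP : P = 0 := P.eq_zero_of_infinite_isRoot <|
      (Set.Icc_infinite (by norm_num : (-1 : ℝ) < 1)).mono fun y hy =>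
        abs_nonpos_iff.mp (hPbnd y hy)
    simp [hP]
  refine abs_le'.mpr ⟨eval_le_mul_eval_T hM hx hPdeg hPbnd, ?_⟩
  simpa using eval_le_mul_eval_T (P := -P) hM hx (by rwa [degree_neg]) (by simpa using hPbnd)

theorem abs_eval_le_mul_eval_T_of_le_of_forall_mem_Icc {n : ℕ} {P : ℝ[X]} {a b z M : ℝ}
    (hab : a < b) (hz : z ≤ a) (hPdeg : P.degree ≤ n)
    (hPbnd : ∀ y ∈ Set.Icc a b, |P.eval y| ≤ M) :
    |P.eval z| ≤ M * (T ℝ n).eval ((a + b - 2 * z) / (b - a)) := by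
  set Q := P.comp (Polynomial.C ((a + b) / 2) - Polynomial.C ((b - a) / 2) * X)
  have hQ : ∀ x, Q.eval x = P.eval ((a + b) / 2 - (b - a) / 2 * x) := fun x => by simp [Q]
  have hba : 0 < b - a := sub_pos.mpr hab
  have hQdeg : Q.degree ≤ n := by
    refine degree_le_of_natDegree_le (natDegree_comp_le.trans ?_)
    have : (Polynomial.C ((a + b) / 2) - Polynomial.C ((b - a) / 2) * X).natDegree ≤ 1 := by
      compute_degree
    nlinarith [natDegree_le_of_degree_le hPdeg]
  have := abs_eval_le_mul_eval_T (M := M) (x := (a + b - 2 * z) / (b - a)) ?_ hQdeg ?_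
  · have hz' : (a + b) / 2 - (b - a) / 2 * ((a + b - 2 * z) / (b - a)) = z := by
      field_simp
      ring
    rwa [hQ, hz'] at this
  · rw [one_le_div hba]; linarith
  · rintro x ⟨hx1, hx2⟩
    rw [hQ]
    exact hPbnd _ ⟨by nlinarith, by nlinarith⟩

end Polynomial.Chebyshev

namespace Real

theorem cosh_log_add_one_div_sub_one {s : ℝ} (hs : 1 < s) :
    cosh (log ((s + 1) / (s - 1))) = (s ^ 2 + 1) / (s ^ 2 - 1) := by
  have hs1 : 0 < s - 1 := sub_pos.mpr hs
  have hs2 : s ^ 2 - 1 ≠ 0 := by nlinarith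
  rw [cosh_log (div_pos (by linarith) hs1), inv_div]
  field_simp
  ring

theorem log_add_one_div_sub_one_le {s : ℝ} (hs : 1 < s) :
    log ((s + 1) / (s - 1)) ≤ 2 / (s - 1) := by
  have hs1 : 0 < s - 1 := sub_pos.mpr hs
  calc log ((s + 1) / (s - 1)) ≤ (s + 1) / (s - 1) - 1 :=
        log_le_sub_one_of_pos (div_pos (by linarith) hs1)
    _ = 2 / (s - 1) := by field_simp; ring

theorem one_sub_mul_cosh_lt_one {c x : ℝ} (h : x ^ 2 / 2 < c) : (1 - c) * cosh x < 1 := by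
  rcases le_or_gt 1 c with hc | hc
  · nlinarith [cosh_pos x]
  calc (1 - c) * cosh x ≤ (1 - c) * exp (x ^ 2 / 2) :=
        mul_le_mul_of_nonneg_left (cosh_le_exp_half_sq x) (by linarith)
    _ < exp (-(x ^ 2 / 2)) * exp (x ^ 2 / 2) := by
        gcongr
        linarith [add_one_le_exp (-(x ^ 2 / 2))]
    _ = 1 := by rw [← exp_add, neg_add_cancel, exp_zero]

end Real

theorem poly_chebyshev_lower_bound_general (k : ℕ) (hk : 1 ≤ k) (L μ : ℝ) (hμ : 0 < μ) (hμL : μ < L)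
    (r : Polynomial ℝ) (hdeg : r.natDegree ≤ k) (h0 : r.eval 0 = 1) :
    ∃ y : ℝ, y ∈ Set.Icc μ L ∧
      1 - 6 * k ^ 2 / (Real.sqrt (L / μ) - 1) ^ 2 < |r.eval y| := by
  by_contra! hr
  set s := √(L / μ)
  have hs : 1 < s := (lt_sqrt zero_le_one).mpr (by rwa [one_pow, one_lt_div hμ])
  set t := log ((s + 1) / (s - 1))
  have hτ : (μ + L) / (L - μ) = cosh t := by
    have : μ ≠ 0 := hμ.ne'
    have : L - μ ≠ 0 := (sub_pos.mpr hμL).ne'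
    rw [cosh_log_add_one_div_sub_one hs, sq_sqrt (div_pos (hμ.trans hμL) hμ).le]
    field_simp
    ring
  have hgrowth : 1 ≤ (1 - 6 * k ^ 2 / (s - 1) ^ 2) * cosh (k * t) := by
    simpa [h0, hτ, Chebyshev.T_real_cosh] using
      Chebyshev.abs_eval_le_mul_eval_T_of_le_of_forall_mem_Icc (z := 0) hμL hμ.le
        (degree_le_of_natDegree_le hdeg) hr
  have hkt : (k * t) ^ 2 / 2 < 6 * k ^ 2 / (s - 1) ^ 2 := by
    have ht0 : 0 ≤ t := log_nonneg ((one_le_div (by linarith)).mpr (by linarith))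
    calc (k * t) ^ 2 / 2 ≤ (k * (2 / (s - 1))) ^ 2 / 2 := by
          gcongr; exact log_add_one_div_sub_one_le hs
      _ = 2 * k ^ 2 / (s - 1) ^ 2 := by rw [mul_pow, div_pow]; ring
      _ < 6 * k ^ 2 / (s - 1) ^ 2 := by gcongr; norm_num
  exact (one_sub_mul_cosh_lt_one hkt).not_ge hgrowth

/-- For any real polynomial `r` of degree at most `k` with `r(0) = 1`, and `0 < μ < L` with
`k ≤ √(L/μ) − 1`, there exists `y ∈ [μ, L]` with `|r(y)| > 1 − 6k²/(√(L/μ) − 1)²`. -/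
theorem poly_chebyshev_lower_bound (k : ℕ) (hk : 1 ≤ k) (L μ : ℝ) (hμ : 0 < μ) (hμL : μ < L)
    (hkcond : (k : ℝ) ≤ Real.sqrt (L / μ) - 1)
    (r : Polynomial ℝ) (hdeg : r.natDegree ≤ k) (h0 : r.eval 0 = 1) :
    ∃ y : ℝ, y ∈ Set.Icc μ L ∧
      1 - 6 * k ^ 2 / (Real.sqrt (L / μ) - 1) ^ 2 < |r.eval y| :=
  poly_chebyshev_lower_bound_general k hk L μ hμ hμL r hdeg h0
end

section
/- Let S, R ∈ ℝ^{n×n} be symmetric positive semidefinite matrices. Then SR + RS ⪯ 4S² + 4‖S − R‖_σ²·I, i.e., the matrix 4S² + 4‖S − R‖_σ²·I − SR − RS is positive semidefinite. -/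
/-!
With `Δ = S - R` and `T = S + Δ / 2`, the symmetry of `S` and `R` gives
`4 S² + 4 ‖Δ‖² I - S R - R S = 2 Tᵀ T + (‖Δ‖² I - Δᵀ Δ) / 2 + (7 / 2) ‖Δ‖² I`,
a sum of three positive semidefinite matrices; the middle one is because `‖Δ x‖ ≤ ‖Δ‖ ‖x‖`.
-/

open Matrix

theorem dotProduct_self_eq_norm_toLp_sq {ι : Type*} [Fintype ι] (x : ι → ℝ) :
    x ⬝ᵥ x = ‖WithLp.toLp 2 x‖ ^ 2 := by
  rw [← real_inner_self_eq_norm_sq, EuclideanSpace.inner_toLp_toLp, star_trivial]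

theorem dotProduct_mulVec_self_le_specNorm_sq {n : ℕ} (A : Matrix (Fin n) (Fin n) ℝ)
    (x : Fin n → ℝ) : A *ᵥ x ⬝ᵥ A *ᵥ x ≤ specNorm A ^ 2 * (x ⬝ᵥ x) := by
  have h := (toEuclideanCLM (𝕜 := ℝ) A).le_opNorm (WithLp.toLp 2 x)
  rw [toEuclideanCLM_toLp] at h
  rw [dotProduct_self_eq_norm_toLp_sq, dotProduct_self_eq_norm_toLp_sq, ← mul_pow]
  exact pow_le_pow_left₀ (norm_nonneg _) h 2

theorem posSemidef_specNorm_sq_smul_one_sub_conjTranspose_mul {n : ℕ}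
    (A : Matrix (Fin n) (Fin n) ℝ) :
    (specNorm A ^ 2 • (1 : Matrix (Fin n) (Fin n) ℝ) - Aᴴ * A).PosSemidef := by
  refine posSemidef_iff_dotProduct_mulVec.mpr ⟨by simp [IsHermitian], fun x => ?_⟩
  have hquad : x ⬝ᵥ (Aᴴ * A) *ᵥ x = A *ᵥ x ⬝ᵥ A *ᵥ x := by
    rw [← mulVec_mulVec, dotProduct_mulVec, conjTranspose_eq_transpose_of_trivial,
      vecMul_transpose]
  simp only [star_trivial, sub_mulVec, smul_mulVec, one_mulVec, dotProduct_sub,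
    dotProduct_smul, smul_eq_mul, hquad, sub_nonneg]
  exact dotProduct_mulVec_self_le_specNorm_sq A x

/-- For symmetric PSD matrices `S, R`, we have `SR + RS ⪯ 4 S² + 4 ‖S − R‖_σ² I`. -/
theorem sr_ineq {n : ℕ} (S R : Matrix (Fin n) (Fin n) ℝ)
    (hS : S.PosSemidef) (hR : R.PosSemidef) :
    ((4 : ℝ) • (S * S) + (4 * specNorm (S - R) ^ 2) • (1 : Matrix (Fin n) (Fin n) ℝ)
      - S * R - R * S).PosSemidef := by
  set c := specNorm (S - R)
  set T := S + (1 / 2 : ℝ) • (S - R)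
  have hdecomp : (4 : ℝ) • (S * S) + (4 * c ^ 2) • (1 : Matrix (Fin n) (Fin n) ℝ) - S * R - R * S
      = (2 : ℝ) • (Tᴴ * T) + (1 / 2 : ℝ) • (c ^ 2 • 1 - (S - R)ᴴ * (S - R))
        + (7 / 2 * c ^ 2) • 1 := by
    simp only [T, conjTranspose_add, conjTranspose_sub, conjTranspose_smul, hS.isHermitian.eq,
      hR.isHermitian.eq, star_trivial, mul_add, add_mul, mul_sub, sub_mul, smul_add, smul_sub,
      smul_mul_assoc, mul_smul_comm, smul_smul]
    module
  rw [hdecomp]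
  exact (((posSemidef_conjTranspose_mul_self T).smul (by norm_num)).add
    ((posSemidef_specNorm_sq_smul_one_sub_conjTranspose_mul (S - R)).smul (by norm_num))).add
    (PosSemidef.one.smul (by positivity))
end

section
/- Suppose F : ℝ^n → ℝ^n is a monotone operator, η > 0, and z : ℕ → ℝ^n is a sequence satisfying the proximal point recursion z^{t+1} = z^t − ηF(z^{t+1}) for all t ≥ 0. If there exists z* ∈ ℝ^n with F(z*) = 0 and ‖z^0 − z*‖ ≤ D for some D > 0, then for every integer T ≥ 1, ‖F(z^T)‖ ≤ D/(η√T). -/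
/-!
A proximal step `z' = z - η F z'` is a Fejér step towards the zero `z*` of `F`: writing
`z - z* = (z' - z*) + η F z'` and using `⟪F z', z' - z*⟫ ≥ 0` gives
`‖z' - z*‖² + η² ‖F z'‖² ≤ ‖z - z*‖²`, hence `η² ∑_{t=1}^T ‖F zᵗ‖² ≤ ‖z⁰ - z*‖²`.
Monotonicity applied to the pair `z', z`, whose difference is `-η F z'`, shows that `‖F zᵗ‖`
is nonincreasing, so the last term of the sum is the smallest: `T η² ‖F z^T‖² ≤ D²`.
-/

open Finset RealInnerProductSpace

namespace ProximalPoint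

variable {E : Type*} [NormedAddCommGroup E] [InnerProductSpace ℝ E]
  {F : E → E} {η : ℝ}

theorem norm_sub_sq_add_sq_le_of_step (hmono : ∀ x y, 0 ≤ ⟪F x - F y, x - y⟫) (hη : 0 ≤ η)
    {x x' zstar : E} (hstep : x' = x - η • F x') (hzstar : F zstar = 0) :
    ‖x' - zstar‖ ^ 2 + η ^ 2 * ‖F x'‖ ^ 2 ≤ ‖x - zstar‖ ^ 2 := by
  have hsplit : x - zstar = (x' - zstar) + η • F x' := by
    rw [← eq_sub_iff_add_eq.mp hstep]; abel
  have hinner : 0 ≤ ⟪x' - zstar, F x'⟫ := by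
    simpa [hzstar, real_inner_comm] using hmono x' zstar
  rw [hsplit, norm_add_sq_real, real_inner_smul_right, norm_smul, mul_pow, Real.norm_eq_abs,
    sq_abs]
  nlinarith

theorem norm_le_of_step (hmono : ∀ x y, 0 ≤ ⟪F x - F y, x - y⟫) (hη : 0 < η)
    {x x' : E} (hstep : x' = x - η • F x') : ‖F x'‖ ≤ ‖F x‖ := by
  have hdiff : x' - x = -(η • F x') := by rw [← eq_sub_iff_add_eq.mp hstep]; abel
  have hm := hmono x' x
  rw [hdiff, inner_neg_right, real_inner_smul_right, inner_sub_left,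
    real_inner_self_eq_norm_sq] at hm
  have hsq : ‖F x'‖ ^ 2 ≤ ‖F x‖ * ‖F x'‖ :=
    calc ‖F x'‖ ^ 2 ≤ ⟪F x, F x'⟫ := by nlinarith
      _ ≤ ‖F x‖ * ‖F x'‖ := real_inner_le_norm _ _
  nlinarith [norm_nonneg (F x'), norm_nonneg (F x)]

variable {z : ℕ → E}

theorem antitone_norm (hmono : ∀ x y, 0 ≤ ⟪F x - F y, x - y⟫) (hη : 0 < η)
    (hrec : ∀ t, z (t + 1) = z t - η • F (z (t + 1))) : Antitone fun t ↦ ‖F (z t)‖ :=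
  antitone_nat_of_succ_le fun t ↦ norm_le_of_step hmono hη (hrec t)

theorem sum_sq_add_norm_sub_sq_le (hmono : ∀ x y, 0 ≤ ⟪F x - F y, x - y⟫) (hη : 0 ≤ η)
    (hrec : ∀ t, z (t + 1) = z t - η • F (z (t + 1))) {zstar : E} (hzstar : F zstar = 0)
    (m : ℕ) :
    ∑ t ∈ range m, η ^ 2 * ‖F (z (t + 1))‖ ^ 2 + ‖z m - zstar‖ ^ 2 ≤ ‖z 0 - zstar‖ ^ 2 := by
  induction m with
  | zero => simp
  | succ m ih =>
    have hstep := norm_sub_sq_add_sq_le_of_step hmono hη (hrec m) hzstar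
    rw [sum_range_succ]
    linarith

theorem nat_mul_sq_mul_sq_norm_le (hmono : ∀ x y, 0 ≤ ⟪F x - F y, x - y⟫) (hη : 0 < η)
    (hrec : ∀ t, z (t + 1) = z t - η • F (z (t + 1))) {zstar : E} (hzstar : F zstar = 0)
    (T : ℕ) : T * (η ^ 2 * ‖F (z T)‖ ^ 2) ≤ ‖z 0 - zstar‖ ^ 2 := by
  have hlast : ∀ t ∈ range T, η ^ 2 * ‖F (z T)‖ ^ 2 ≤ η ^ 2 * ‖F (z (t + 1))‖ ^ 2 := by
    intro t ht
    have := antitone_norm hmono hη hrec (mem_range.mp ht : t + 1 ≤ T)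
    gcongr
  calc (T : ℝ) * (η ^ 2 * ‖F (z T)‖ ^ 2)
      ≤ ∑ t ∈ range T, η ^ 2 * ‖F (z (t + 1))‖ ^ 2 := by
        simpa using card_nsmul_le_sum _ _ _ hlast
    _ ≤ ‖z 0 - zstar‖ ^ 2 := by
        linarith [sum_sq_add_norm_sub_sq_le hmono hη.le hrec hzstar T, sq_nonneg ‖z T - zstar‖]

end ProximalPoint

theorem proximal_point_last_iterate_general {n : ℕ}
    (F : EuclideanSpace ℝ (Fin n) → EuclideanSpace ℝ (Fin n))
    (hmono : ∀ z z', (0 : ℝ) ≤ inner ℝ (F z - F z') (z - z'))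
    (η : ℝ) (hη : 0 < η)
    (z : ℕ → EuclideanSpace ℝ (Fin n))
    (hrec : ∀ t : ℕ, z (t + 1) = z t - η • F (z (t + 1)))
    (zstar : EuclideanSpace ℝ (Fin n)) (hzstar : F zstar = 0)
    (D : ℝ) (hinit : ‖z 0 - zstar‖ ≤ D)
    (T : ℕ) (hT : 1 ≤ T) :
    ‖F (z T)‖ ≤ D / (η * Real.sqrt T) := by
  have hT' : (0 : ℝ) < T := by exact_mod_cast hT
  have hD : 0 ≤ D := (norm_nonneg _).trans hinit
  rw [le_div_iff₀ (by positivity)]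
  refine (pow_le_pow_iff_left₀ (by positivity) hD two_ne_zero).mp ?_
  calc (‖F (z T)‖ * (η * Real.sqrt T)) ^ 2 = T * (η ^ 2 * ‖F (z T)‖ ^ 2) := by
        rw [mul_pow, mul_pow, Real.sq_sqrt hT'.le]; ring
    _ ≤ ‖z 0 - zstar‖ ^ 2 := ProximalPoint.nat_mul_sq_mul_sq_norm_le hmono hη hrec hzstar T
    _ ≤ D ^ 2 := by gcongr

/-- Last-iterate convergence of the proximal point algorithm for a monotone operator:
if `z^{t+1} = z^t − η F(z^{t+1})`, `F(z*) = 0`, and `‖z⁰ − z*‖ ≤ D`, then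
`‖F(z^T)‖ ≤ D/(η √T)` for every `T ≥ 1`. -/
theorem proximal_point_last_iterate {n : ℕ}
    (F : EuclideanSpace ℝ (Fin n) → EuclideanSpace ℝ (Fin n))
    (hmono : ∀ z z', (0 : ℝ) ≤ inner ℝ (F z - F z') (z - z'))
    (η : ℝ) (hη : 0 < η)
    (z : ℕ → EuclideanSpace ℝ (Fin n))
    (hrec : ∀ t : ℕ, z (t + 1) = z t - η • F (z (t + 1)))
    (zstar : EuclideanSpace ℝ (Fin n)) (hzstar : F zstar = 0)
    (D : ℝ) (hD : 0 < D) (hinit : ‖z 0 - zstar‖ ≤ D)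
    (T : ℕ) (hT : 1 ≤ T) :
    ‖F (z T)‖ ≤ D / (η * Real.sqrt T) :=
  proximal_point_last_iterate_general F hmono η hη z hrec zstar hzstar D hinit T hT
end

section
/- Let n ≥ 2 be even, ν > 0, and let A = [[0, νI], [−νI, 0]] ∈ ℝ^{n×n} where I is the (n/2)×(n/2) identity. Let q be any polynomial with real coefficients. Then for every b ∈ ℝ^n, ‖q(A)·b‖ = |q(νi)|·‖b‖, where q(A) denotes evaluation of q at the matrix A, and |q(νi)| is the complex modulus of q evaluated at the purely imaginary number νi. -/
/-!
Since `A² = -ν²` and `(νi)² = -ν²`, both `q(A)` and `q(νi)` are obtained by evaluating the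
remainder `c + d X` of `q` modulo `X² + ν²`. Skew-symmetry of `A` makes `b` and `A b`
orthogonal with `‖A b‖ = ν ‖b‖`, so `‖(c + d A) b‖² = (c² + d²ν²) ‖b‖² = |c + d νi|² ‖b‖²`.
-/

open Matrix

/-- The Euclidean norm of a real vector. -/
noncomputable def enorm {ι : Type*} [Fintype ι] (v : ι → ℝ) : ℝ := Real.sqrt (∑ i, v i ^ 2)

open Polynomial in
theorem Polynomial.aeval_eq_of_sq_eq_neg_algebraMap {R B : Type*} [CommRing R] [Nontrivial R]
    [Ring B] [Algebra R B] {s : R} {a : B} (ha : a ^ 2 = -algebraMap R B s) (q : R[X]) :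
    aeval a q = algebraMap R B ((q %ₘ (X ^ 2 + C s)).coeff 0)
      + (q %ₘ (X ^ 2 + C s)).coeff 1 • a := by
  have hroot : aeval a (X ^ 2 + C s) = 0 := by simp [ha]
  have hdeg : (q %ₘ (X ^ 2 + C s)).degree ≤ 1 := by
    have := degree_modByMonic_lt q (monic_X_pow_add_C s two_ne_zero)
    rw [degree_X_pow_add_C two_pos] at this
    exact Order.le_of_lt_succ this
  conv_lhs => rw [← aeval_modByMonic_eq_self_of_root hroot, eq_X_add_C_of_degree_le_one hdeg]
  simp [Algebra.smul_def, add_comm]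

namespace Matrix

variable {ι R : Type*} [Fintype ι] [CommRing R]

theorem dotProduct_mulVec_self_eq_zero [NoZeroDivisors R] [CharZero R]
    {A : Matrix ι ι R} (hA : Aᵀ = -A) (b : ι → R) : b ⬝ᵥ A *ᵥ b = 0 := by
  have : b ⬝ᵥ A *ᵥ b = -(b ⬝ᵥ A *ᵥ b) := by
    conv_lhs => rw [dotProduct_mulVec, ← mulVec_transpose, hA, dotProduct_comm]
    simp [neg_mulVec]
  exact self_eq_neg.mp this

theorem mulVec_dotProduct_mulVec (A : Matrix ι ι R) (b : ι → R) :
    A *ᵥ b ⬝ᵥ A *ᵥ b = b ⬝ᵥ (Aᵀ * A) *ᵥ b := by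
  rw [← mulVec_mulVec, mulVec_transpose, dotProduct_comm b, dotProduct_mulVec]

theorem smul_add_smul_mulVec_dotProduct_self [DecidableEq ι] [NoZeroDivisors R] [CharZero R]
    {A : Matrix ι ι R} {s : R} (hskew : Aᵀ = -A) (horth : Aᵀ * A = s • 1) (c d : R)
    (b : ι → R) :
    (c • b + d • A *ᵥ b) ⬝ᵥ (c • b + d • A *ᵥ b) = (c ^ 2 + d ^ 2 * s) * (b ⬝ᵥ b) := by
  have hzero := dotProduct_mulVec_self_eq_zero hskew b
  have hzero' : A *ᵥ b ⬝ᵥ b = 0 := by rw [dotProduct_comm, hzero]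
  simp only [add_dotProduct, dotProduct_add, smul_dotProduct, dotProduct_smul, hzero, hzero',
    mulVec_dotProduct_mulVec, horth, smul_mulVec, one_mulVec, smul_eq_mul]
  ring

end Matrix

theorem enorm_eq_sqrt_dotProduct {ι : Type*} [Fintype ι] (v : ι → ℝ) :
    _root_.enorm v = √(v ⬝ᵥ v) := by
  simp [_root_.enorm, dotProduct, sq]

open Polynomial in
theorem enorm_aeval_mulVec_eq_norm_aeval_mul_I {ι : Type*} [Fintype ι] [DecidableEq ι] {ν : ℝ}
    {A : Matrix ι ι ℝ} (hskew : Aᵀ = -A) (hsq : A ^ 2 = -algebraMap ℝ _ (ν ^ 2))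
    (q : ℝ[X]) (b : ι → ℝ) :
    _root_.enorm (aeval A q *ᵥ b) = ‖aeval ((ν : ℂ) * Complex.I) q‖ * _root_.enorm b := by
  have hI : ((ν : ℂ) * Complex.I) ^ 2 = -algebraMap ℝ ℂ (ν ^ 2) := by
    simp [mul_pow]
  have horth : Aᵀ * A = ν ^ 2 • 1 := by
    rw [hskew, neg_mul, ← sq, hsq, neg_neg, Algebra.algebraMap_eq_smul_one]
  rw [aeval_eq_of_sq_eq_neg_algebraMap hsq, aeval_eq_of_sq_eq_neg_algebraMap hI,
    Algebra.algebraMap_eq_smul_one, add_mulVec, smul_mulVec, smul_mulVec, one_mulVec,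
    enorm_eq_sqrt_dotProduct, enorm_eq_sqrt_dotProduct,
    smul_add_smul_mulVec_dotProduct_self hskew horth, Real.sqrt_mul (by positivity)]
  congr 1
  generalize (q %ₘ (X ^ 2 + C (ν ^ 2))).coeff 0 = c
  generalize (q %ₘ (X ^ 2 + C (ν ^ 2))).coeff 1 = d
  rw [Complex.coe_algebraMap, Complex.real_smul, ← mul_assoc, ← Complex.ofReal_mul,
    Complex.norm_add_mul_I]
  ring_nf

theorem norm_poly_eval_block_matrix_general (n : ℕ)
    (ν : ℝ) (q : Polynomial ℝ)
    (A : Matrix (Fin (n / 2) ⊕ Fin (n / 2)) (Fin (n / 2) ⊕ Fin (n / 2)) ℝ)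
    (hA : A = Matrix.fromBlocks 0 (ν • (1 : Matrix (Fin (n / 2)) (Fin (n / 2)) ℝ))
      (-(ν • (1 : Matrix (Fin (n / 2)) (Fin (n / 2)) ℝ))) 0) :
    ∀ b : Fin (n / 2) ⊕ Fin (n / 2) → ℝ,
      _root_.enorm ((Polynomial.aeval A q) *ᵥ b)
        = ‖Polynomial.aeval ((ν : ℂ) * Complex.I) q‖ * _root_.enorm b := by
  have hskew : Aᵀ = -A := by
    simp [hA, fromBlocks_transpose, fromBlocks_neg]
  have hsq : A ^ 2 = -algebraMap ℝ _ (ν ^ 2) := by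
    rw [hA, sq, fromBlocks_multiply, Algebra.algebraMap_eq_smul_one, ← fromBlocks_one,
      fromBlocks_smul, fromBlocks_neg]
    simp [sq, smul_smul]
  exact enorm_aeval_mulVec_eq_norm_aeval_mul_I hskew hsq q

/-- For `A = [[0, νI], [−νI, 0]]` and any real polynomial `q`,
`‖q(A) b‖ = |q(νi)| ‖b‖` for every `b`, where `|q(νi)|` is the complex modulus of
the evaluation of `q` at the purely imaginary number `νi`. -/
theorem norm_poly_eval_block_matrix (n : ℕ) (hn : 2 ≤ n) (hneven : Even n)
    (ν : ℝ) (hν : 0 < ν) (q : Polynomial ℝ)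
    (A : Matrix (Fin (n / 2) ⊕ Fin (n / 2)) (Fin (n / 2) ⊕ Fin (n / 2)) ℝ)
    (hA : A = Matrix.fromBlocks 0 (ν • (1 : Matrix (Fin (n / 2)) (Fin (n / 2)) ℝ))
      (-(ν • (1 : Matrix (Fin (n / 2)) (Fin (n / 2)) ℝ))) 0) :
    ∀ b : Fin (n / 2) ⊕ Fin (n / 2) → ℝ,
      _root_.enorm ((Polynomial.aeval A q) *ᵥ b)
        = ‖Polynomial.aeval ((ν : ℂ) * Complex.I) q‖ * _root_.enorm b :=
  norm_poly_eval_block_matrix_general n ν q A hA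
end
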